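/- arXiv:2007.15331 — 7 statements merged into one kernel-verified Lean document; each statement's English description precedes it below -/
import Mathlib

section
/- Let Z be a random variable taking values in a bounded interval [a,b]. Then for any positive integer m and any x in (0,1), with probability at least 1 - x, the empirical mean Z̄_m and empirical variance V̄_m of m i.i.d. copies of Z satisfy |Z̄_m - E[Z]| ≤ sqrt(2 V̄_m log(3/x) / m) + 3 (b-a) log(3/x) / m. -/
/-!
Bernstein's inequality (Chernoff's bound together with `E e^{tX} ≤ exp (σ² t² / (2 (1 - t M / 3)))`
for centred `X ≤ M`) bounds each one-sided deviation of an empirical mean by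
`√(2 σ² L / m) + M L / (3 m)` outside an event of probability `e^{-L}`. It is applied three times:
to both deviations of `Z̄_m` and to the lower deviation of `(1/m) ∑ (Z_i - E Z)²`, whose summands
have variance at most `(b - a)² σ²`. As `V̄_m = (1/m) ∑ (Z_i - E Z)² - (Z̄_m - E Z)²`, outside the
three events either `σ ≤ √V̄_m + (4/3) (b - a) √(2 L / m)`, which turns the bound on `|Z̄_m - E Z|`
into an empirical one, or `σ` is so small that `|Z̄_m - E Z| ≤ 3 (b - a) L / m` already.
With `L = log (3 / x)` the three events have total probability at most `x`.
-/

open MeasureTheory ProbabilityTheory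

/-- Empirical mean of the first `m` of the random variables `Z i`. -/
noncomputable def empMean {Ω : Type*} (Z : ℕ → Ω → ℝ) (m : ℕ) (ω : Ω) : ℝ :=
  (∑ i ∈ Finset.range m, Z i ω) / m

/-- Empirical variance of the first `m` of the random variables `Z i`. -/
noncomputable def empVar {Ω : Type*} (Z : ℕ → Ω → ℝ) (m : ℕ) (ω : Ω) : ℝ :=
  (∑ i ∈ Finset.range m, (Z i ω - empMean Z m ω) ^ 2) / m

open Real Finset

namespace Real

lemma exp_le_one_add_add_sq_div_two_of_nonpos {y : ℝ} (hy : y ≤ 0) :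
    exp y ≤ 1 + y + y ^ 2 / 2 := by
  -- `e^{-y}` dominates its cubic Taylor polynomial, whose product with `1 + y + y²/2` is `≥ 1`
  have hcubic : 1 - y + y ^ 2 / 2 - y ^ 3 / 6 ≤ exp (-y) := by
    have h := sum_le_exp_of_nonneg (neg_nonneg.2 hy) 4
    norm_num [Finset.sum_range_succ, Nat.factorial] at h
    linarith
  have hpos : 0 < 1 - y + y ^ 2 / 2 - y ^ 3 / 6 := by nlinarith [pow_two_nonneg y]
  rw [exp_neg, le_inv_comm₀ hpos (exp_pos y)] at hcubic
  refine hcubic.trans ((inv_le_iff_one_le_mul₀ hpos).2 ?_)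
  nlinarith [pow_two_nonneg y, pow_two_nonneg (y ^ 2), mul_nonpos_iff.2 (Or.inr ⟨hy, sq_nonneg y⟩)]

lemma exp_le_one_add_add_sq_div_of_nonneg {y : ℝ} (h0 : 0 ≤ y) (h3 : y < 3) :
    exp y ≤ 1 + y + y ^ 2 / (2 * (1 - y / 3)) := by
  set g : ℝ → ℝ := fun z => (6 + 4 * z + z ^ 2) * exp (-z) + 2 * z
  have hg : ∀ z, HasDerivAt g (2 - (2 + 2 * z + z ^ 2) * exp (-z)) z := fun z => by
    have := (((hasDerivAt_id z).const_mul 4).const_add 6 |>.add (hasDerivAt_pow 2 z)).mul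
      (hasDerivAt_neg z).exp |>.add ((hasDerivAt_id z).const_mul 2)
    exact this.congr_deriv (by simp only [mul_one, Nat.cast_ofNat, Nat.add_one_sub_one, pow_one, id_eq, Pi.add_apply, mul_neg]; ring)
  have hmono : MonotoneOn g (Set.Ici 0) := by
    refine monotoneOn_of_hasDerivWithinAt_nonneg (convex_Ici 0)
      (fun z _ => (hg z).continuousAt.continuousWithinAt) (fun z _ => (hg z).hasDerivWithinAt) ?_
    intro z hz
    rw [interior_Ici, Set.mem_Ioi] at hz
    have := quadratic_le_exp_of_nonneg hz.le
    rw [exp_neg, sub_nonneg, ← div_eq_mul_inv, div_le_iff₀ (exp_pos z)]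
    linarith
  have key : 6 - 2 * y ≤ (6 + 4 * y + y ^ 2) / exp y := by
    have := hmono Set.self_mem_Ici h0 h0
    simp only [g, exp_neg, ← div_eq_mul_inv, mul_zero, add_zero, ne_eq, OfNat.ofNat_ne_zero,
      not_false_eq_true, zero_pow, exp_zero, div_one] at this
    linarith
  rw [le_div_iff₀ (exp_pos y)] at key
  have h3' : 3 - y ≠ 0 := by linarith
  have h6 : 0 < 6 - 2 * y := by linarith
  calc exp y ≤ (6 + 4 * y + y ^ 2) / (6 - 2 * y) := by rw [le_div_iff₀ h6]; linarith
    _ = 1 + y + y ^ 2 / (2 * (1 - y / 3)) := by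
      rw [div_eq_iff h6.ne']
      field_simp
      ring

lemma exp_le_one_add_add_sq_div_of_le {y A : ℝ} (hy : y ≤ A) (hA0 : 0 ≤ A) (hA3 : A < 3) :
    exp y ≤ 1 + y + y ^ 2 / (2 * (1 - A / 3)) := by
  have hpos : 0 < 1 - A / 3 := by linarith
  rcases le_or_gt y 0 with hy0 | hy0
  · calc exp y ≤ 1 + y + y ^ 2 / 2 := exp_le_one_add_add_sq_div_two_of_nonpos hy0
      _ ≤ 1 + y + y ^ 2 / (2 * (1 - A / 3)) := by
        gcongr
        linarith
  · calc exp y ≤ 1 + y + y ^ 2 / (2 * (1 - y / 3)) :=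
          exp_le_one_add_add_sq_div_of_nonneg hy0.le (by linarith)
      _ ≤ 1 + y + y ^ 2 / (2 * (1 - A / 3)) := by gcongr

end Real

lemma le_mul_add_of_sq_sub_le {c s p w D : ℝ} (hs : 0 ≤ s) (hsc : 2 * s ≤ c) (hp : 0 ≤ p)
    (hw : 0 ≤ w) (hD0 : 0 ≤ D) (hD : D ≤ s * p + c * p ^ 2 / 6)
    (hV : s ^ 2 - c * s * p - s ^ 2 * p ^ 2 / 6 - D ^ 2 ≤ w ^ 2) :
    D ≤ w * p + 3 / 2 * c * p ^ 2 := by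
  rcases le_or_gt s (4 / 3 * c * p) with hsmall | hlarge
  · nlinarith [mul_le_mul_of_nonneg_right hsmall hp, mul_nonneg hw hp]
  · suffices s - 4 / 3 * c * p ≤ w by nlinarith [mul_le_mul_of_nonneg_right this hp]
    have hcp : c * p ≤ 3 / 4 * s := by linarith
    have hsp : s * p ≤ 3 / 8 * s := by nlinarith
    have hc : 0 ≤ c := by linarith
    have h1 : c ^ 2 * p ≤ 3 / 4 * c * s := by nlinarith
    have h2 : s ^ 2 * p ≤ 3 / 16 * c * s := by nlinarith
    have h3 : c * s * p ^ 2 ≤ 9 / 64 * c * s := by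
      nlinarith [mul_le_mul_of_nonneg_left hcp (mul_nonneg hs hp)]
    have h4 : c ^ 2 * p ^ 3 ≤ 27 / 256 * c * s := by
      nlinarith [mul_le_mul_of_nonneg_left hcp (mul_nonneg (mul_nonneg hc hp) hp)]
    -- expanded, this is `(s - 4/3 c p)² ≤ s² - c s p - s² p² / 6 - (s p + c p² / 6)²`
    have hpoly : 16 / 9 * c ^ 2 * p ^ 2 + 7 / 6 * s ^ 2 * p ^ 2 + 1 / 3 * c * s * p ^ 3
        + c ^ 2 * p ^ 4 / 36 ≤ 5 / 3 * c * s * p := by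
      nlinarith
    have hD2 : D ^ 2 ≤ (s * p + c * p ^ 2 / 6) ^ 2 := pow_le_pow_left₀ hD0 hD 2
    refine (pow_le_pow_iff_left₀ (by linarith) hw two_ne_zero).1 ?_
    nlinarith

lemma le_sqrt_two_mul_add_of_le {c v V D r : ℝ} (hc : 0 ≤ c) (hv : 0 ≤ v) (hvc : v ≤ (c / 2) ^ 2)
    (hV : 0 ≤ V) (hr : 0 ≤ r) (hD0 : 0 ≤ D) (hD : D ≤ √(2 * v * r) + c * r / 3)
    (hDV : v - √(2 * (c ^ 2 * v) * r) - v * r / 3 - D ^ 2 ≤ V) :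
    D ≤ √(2 * V * r) + 3 * c * r := by
  have hp2 : √(2 * r) ^ 2 = 2 * r := sq_sqrt (by positivity)
  have hsqrt : ∀ {y}, 0 ≤ y → √(2 * y * r) = √y * √(2 * r) := fun hy => by
    rw [← sqrt_mul hy]
    ring_nf
  rw [hsqrt hv] at hD
  rw [hsqrt (by positivity), sqrt_mul (sq_nonneg c), sqrt_sq hc] at hDV
  rw [hsqrt hV]
  have hsc : 2 * √v ≤ c := by
    have := sqrt_le_sqrt hvc
    rw [sqrt_sq (by positivity)] at this
    linarith
  have key := le_mul_add_of_sq_sub_le (sqrt_nonneg v) hsc (sqrt_nonneg _) (sqrt_nonneg V) hD0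
    (by rw [hp2]; linarith) (by rw [sq_sqrt hv, sq_sqrt hV, hp2]; linarith)
  rw [hp2] at key
  linarith

section EmpiricalMoments

variable {Ω : Type*} (Z : ℕ → Ω → ℝ) {m : ℕ} (ω : Ω)

lemma empMean_neg : empMean (fun i ω => -Z i ω) m ω = -empMean Z m ω := by
  simp only [empMean, sum_neg_distrib, neg_div]

lemma sum_range_sub_eq_mul_empMean_sub (hm : m ≠ 0) (c : ℝ) :
    ∑ i ∈ range m, (Z i ω - c) = m * (empMean Z m ω - c) := by
  simp only [empMean, sum_sub_distrib, sum_const, card_range, nsmul_eq_mul]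
  field_simp

lemma empVar_eq_empMean_sub_sq (hm : m ≠ 0) (c : ℝ) :
    empVar Z m ω = empMean (fun i ω => (Z i ω - c) ^ 2) m ω - (empMean Z m ω - c) ^ 2 := by
  simp only [empVar, empMean, sub_sq, sum_add_distrib, sum_sub_distrib, ← sum_mul, ← mul_sum,
    sum_const, card_range, nsmul_eq_mul]
  field_simp
  ring

lemma empVar_nonneg : 0 ≤ empVar Z m ω :=
  div_nonneg (sum_nonneg fun _ _ => sq_nonneg _) m.cast_nonneg

end EmpiricalMoments

section Concentration

variable {Ω : Type*} {mΩ : MeasurableSpace Ω} {P : Measure Ω}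

lemma integrable_exp_mul_of_ae_le [IsFiniteMeasure P] {X : Ω → ℝ} (hX : AEMeasurable X P)
    {M t : ℝ} (hM : ∀ᵐ ω ∂P, X ω ≤ M) (ht : 0 ≤ t) :
    Integrable (fun ω => exp (t * X ω)) P := by
  refine (integrable_const (exp (t * M))).mono' (hX.const_mul t).exp.aestronglyMeasurable ?_
  filter_upwards [hM] with ω hω
  rw [norm_of_nonneg (exp_pos _).le]
  exact exp_le_exp.2 (mul_le_mul_of_nonneg_left hω ht)

variable [IsProbabilityMeasure P]

lemma ofReal_one_sub_le_of_measure_compl_le {s : Set Ω} {x : ℝ} (hx : 0 ≤ x)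
    (h : P sᶜ ≤ ENNReal.ofReal x) : ENNReal.ofReal (1 - x) ≤ P s := by
  rw [ENNReal.ofReal_sub _ hx, ENNReal.ofReal_one, tsub_le_iff_right]
  calc 1 = P Set.univ := measure_univ.symm
    _ ≤ P s + P sᶜ := measure_univ_le_add_compl s
    _ ≤ P s + ENNReal.ofReal x := by gcongr

lemma variance_sq_le_of_abs_le {Y : Ω → ℝ} (hY : AEMeasurable Y P) {c : ℝ}
    (h : ∀ᵐ ω ∂P, |Y ω| ≤ c) :
    variance (fun ω => Y ω ^ 2) P ≤ c ^ 2 * P[fun ω => Y ω ^ 2] := by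
  have hsq : ∀ᵐ ω ∂P, Y ω ^ 2 ≤ c ^ 2 := h.mono fun ω hω => by
    simpa only [sq_abs] using pow_le_pow_left₀ (abs_nonneg _) hω 2
  have hY2 : MemLp (fun ω => Y ω ^ 2) 2 P :=
    memLp_of_bounded (hsq.mono fun ω hω => ⟨sq_nonneg _, hω⟩) (hY.pow_const 2).aestronglyMeasurable 2
  calc variance (fun ω => Y ω ^ 2) P ≤ P[fun ω => (Y ω ^ 2) ^ 2] :=
        variance_le_expectation_sq hY2.aestronglyMeasurable
    _ ≤ P[fun ω => c ^ 2 * Y ω ^ 2] := by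
        refine integral_mono_ae hY2.integrable_sq ((hY2.integrable one_le_two).const_mul _) ?_
        filter_upwards [hsq] with ω hω
        rw [sq (Y ω ^ 2)]
        exact mul_le_mul_of_nonneg_right hω (sq_nonneg _)
    _ = c ^ 2 * P[fun ω => Y ω ^ 2] := integral_const_mul _ _

lemma mgf_le_exp_of_integral_eq_zero {X : Ω → ℝ} (hX : MemLp X 2 P) (hmean : P[X] = 0)
    {M t : ℝ} (hM : ∀ᵐ ω ∂P, X ω ≤ M) (hM0 : 0 ≤ M) (ht : 0 ≤ t) (htM : t * M < 3) :
    mgf X P t ≤ exp (variance X P * t ^ 2 / (2 * (1 - t * M / 3))) := by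
  set K := t ^ 2 / (2 * (1 - t * M / 3))
  have hquad : ∀ᵐ ω ∂P, exp (t * X ω) ≤ 1 + t * X ω + K * X ω ^ 2 := by
    filter_upwards [hM] with ω hω
    calc exp (t * X ω) ≤ 1 + t * X ω + (t * X ω) ^ 2 / (2 * (1 - t * M / 3)) :=
          exp_le_one_add_add_sq_div_of_le (mul_le_mul_of_nonneg_left hω ht) (mul_nonneg ht hM0) htM
      _ = 1 + t * X ω + K * X ω ^ 2 := by ring
  have hlin : Integrable (fun ω => 1 + t * X ω) P :=
    (integrable_const 1).add ((hX.integrable one_le_two).const_mul t)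
  have hsq : Integrable (fun ω => K * X ω ^ 2) P := hX.integrable_sq.const_mul K
  calc mgf X P t ≤ ∫ ω, (1 + t * X ω + K * X ω ^ 2) ∂P :=
        integral_mono_ae (integrable_exp_mul_of_ae_le hX.aemeasurable hM ht) (hlin.add hsq) hquad
    _ = 1 + K * variance X P := by
        rw [integral_add hlin hsq, integral_add (integrable_const 1)
          ((hX.integrable one_le_two).const_mul t), integral_const_mul, integral_const_mul, hmean,
          variance_of_integral_eq_zero hX.aemeasurable hmean]
        simp
    _ ≤ exp (K * variance X P) := by linarith [add_one_le_exp (K * variance X P)]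
    _ = exp (variance X P * t ^ 2 / (2 * (1 - t * M / 3))) := by rw [mul_comm, ← mul_div_assoc]

lemma measureReal_le_empMean_sub_le_exp {X : ℕ → Ω → ℝ} (hmeas : ∀ i, Measurable (X i))
    (hindep : iIndepFun X P) (hident : ∀ i, IdentDistrib (X i) (X 0) P P) (hX : MemLp (X 0) 2 P)
    {M t : ℝ} (hM : ∀ᵐ ω ∂P, X 0 ω - P[X 0] ≤ M) (hM0 : 0 ≤ M) (ht : 0 ≤ t) (htM : t * M < 3)
    {m : ℕ} (hm : 0 < m) (ε : ℝ) :
    P.real {ω | ε ≤ empMean X m ω - P[X 0]} ≤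
      exp (m * (variance (X 0) P * t ^ 2 / (2 * (1 - t * M / 3)) - t * ε)) := by
  set μ := P[X 0]
  set Y : ℕ → Ω → ℝ := fun i ω => X i ω - μ
  have hYmeas : ∀ i, Measurable (Y i) := fun i => (hmeas i).sub_const μ
  have hYindep : iIndepFun Y P :=
    hindep.comp (fun _ y => y - μ) (fun _ => measurable_id.sub_const μ)
  have hYident : ∀ i, IdentDistrib (Y i) (Y 0) P P :=
    fun i => (hident i).comp (measurable_id.sub_const μ)
  have hYint : ∀ i, Integrable (fun ω => exp (t * Y i ω)) P := fun i =>
    ((hYident i).comp (measurable_const_mul t).exp).integrable_iff.2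
      (integrable_exp_mul_of_ae_le (hYmeas 0).aemeasurable hM ht)
  have hevent : {ω | ε ≤ empMean X m ω - μ} = {ω | m * ε ≤ (∑ i ∈ range m, Y i) ω} := by
    ext ω
    simp only [Set.mem_ofPred_eq, Finset.sum_apply, Y, sum_range_sub_eq_mul_empMean_sub X ω hm.ne',
      mul_le_mul_iff_right₀ (Nat.cast_pos.2 hm : (0 : ℝ) < m)]
  have hmgf : mgf (∑ i ∈ range m, Y i) P t = mgf (Y 0) P t ^ m := by
    rw [mgf_sum_of_identDistrib hYmeas hYindep (fun i _ j _ => (hYident i).trans (hYident j).symm)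
      (mem_range.2 hm), card_range]
  have hY0 : mgf (Y 0) P t ≤ exp (variance (X 0) P * t ^ 2 / (2 * (1 - t * M / 3))) := by
    have hmean : P[Y 0] = 0 := by
      simp [Y, integral_sub (hX.integrable one_le_two) (integrable_const μ), μ]
    have hvar : variance (Y 0) P = variance (X 0) P := variance_sub_const hX.aestronglyMeasurable μ
    rw [← hvar]
    exact mgf_le_exp_of_integral_eq_zero (hX.sub (memLp_const μ)) hmean hM hM0 ht htM
  calc P.real {ω | ε ≤ empMean X m ω - μ}
      ≤ exp (-t * (m * ε)) * mgf (∑ i ∈ range m, Y i) P t := by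
        rw [hevent]
        exact measure_ge_le_exp_mul_mgf _ ht (hYindep.integrable_exp_mul_sum hYmeas fun i _ => hYint i)
    _ ≤ exp (-t * (m * ε)) * exp (variance (X 0) P * t ^ 2 / (2 * (1 - t * M / 3))) ^ m := by
        rw [hmgf]
        gcongr
        exact mgf_nonneg
    _ = exp (m * (variance (X 0) P * t ^ 2 / (2 * (1 - t * M / 3)) - t * ε)) := by
        rw [← exp_nat_mul, ← exp_add]
        ring_nf

lemma bernstein_exponent_eq {v M u r : ℝ} (hM : 0 ≤ M) (hu : 0 < u) (hvu : v * u ^ 2 = 2 * r) :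
    v * (u / (1 + M * u / 3)) ^ 2 / (2 * (1 - u / (1 + M * u / 3) * M / 3))
      - u / (1 + M * u / 3) * (v * u + M * r / 3) = -r := by
  have h1 : 1 - u / (1 + M * u / 3) * M / 3 = 1 / (1 + M * u / 3) := by
    field_simp
    ring
  rw [h1]
  field_simp
  linear_combination (-3 : ℝ) * hvu

theorem measure_le_empMean_sub_le {X : ℕ → Ω → ℝ} (hmeas : ∀ i, Measurable (X i))
    (hindep : iIndepFun X P) (hident : ∀ i, IdentDistrib (X i) (X 0) P P) (hX : MemLp (X 0) 2 P)
    {v M : ℝ} (hvar : variance (X 0) P ≤ v) (hv : 0 < v) (hM : ∀ᵐ ω ∂P, X 0 ω - P[X 0] ≤ M)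
    (hM0 : 0 ≤ M) {m : ℕ} (hm : 0 < m) {L : ℝ} (hL : 0 < L) :
    P {ω | √(2 * v * (L / m)) + M * (L / m) / 3 ≤ empMean X m ω - P[X 0]} ≤
      ENNReal.ofReal (exp (-L)) := by
  -- `u` minimises the sub-Gaussian part `v t² / 2 - t √(2 v L / m)` of the exponent
  set u := √(2 * (L / m) / v)
  have hu : 0 < u := by positivity
  have hvu : v * u ^ 2 = 2 * (L / m) := by
    rw [sq_sqrt (by positivity)]
    field_simp
  have hsqrt : √(2 * v * (L / m)) = v * u := by
    rw [show 2 * v * (L / m) = (v * u) ^ 2 by linear_combination -v * hvu, sqrt_sq (by positivity)]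
  have hexponent := bernstein_exponent_eq hM0 hu hvu
  rw [← hsqrt] at hexponent
  set t := u / (1 + M * u / 3)
  have htM : t * M < 3 := by
    rw [div_mul_eq_mul_div, div_lt_iff₀ (by positivity)]
    linarith
  have htM' : 0 < 1 - t * M / 3 := by linarith
  rw [← ofReal_measureReal]
  refine ENNReal.ofReal_le_ofReal ?_
  calc P.real {ω | √(2 * v * (L / m)) + M * (L / m) / 3 ≤ empMean X m ω - P[X 0]}
      ≤ exp (m * (variance (X 0) P * t ^ 2 / (2 * (1 - t * M / 3))
          - t * (√(2 * v * (L / m)) + M * (L / m) / 3))) :=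
        measureReal_le_empMean_sub_le_exp hmeas hindep hident hX hM hM0 (by positivity) htM hm _
    _ ≤ exp (m * (v * t ^ 2 / (2 * (1 - t * M / 3))
          - t * (√(2 * v * (L / m)) + M * (L / m) / 3))) := by gcongr
    _ = exp (-L) := by
        rw [hexponent]
        field_simp

end Concentration

lemma abs_empMean_sub_le_of_le {Ω : Type*} {Z : ℕ → Ω → ℝ} {m : ℕ} (hm : m ≠ 0) {ω : Ω}
    {a b μ σ2 L : ℝ} (hab : a ≤ b)
    (hσ : 0 ≤ σ2) (hσb : σ2 ≤ ((b - a) / 2) ^ 2) (hL : 0 ≤ L)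
    (hup : empMean Z m ω - μ ≤ √(2 * σ2 * (L / m)) + (b - a) * (L / m) / 3)
    (hlow : μ - empMean Z m ω ≤ √(2 * σ2 * (L / m)) + (b - a) * (L / m) / 3)
    (hsq : σ2 - empMean (fun i ω => (Z i ω - μ) ^ 2) m ω ≤
      √(2 * ((b - a) ^ 2 * σ2) * (L / m)) + σ2 * (L / m) / 3) :
    |empMean Z m ω - μ| ≤ √(2 * empVar Z m ω * L / m) + 3 * (b - a) * L / m := by
  simp only [mul_div_assoc]
  refine le_sqrt_two_mul_add_of_le (by linarith) hσ hσb (empVar_nonneg Z ω) (by positivity)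
    (abs_nonneg _) (abs_sub_le_iff.2 ⟨hup, hlow⟩) ?_
  rw [empVar_eq_empMean_sub_sq Z ω hm μ, sq_abs]
  linarith

section BoundedIID

variable {Ω : Type*} {mΩ : MeasurableSpace Ω} {P : Measure Ω} [IsProbabilityMeasure P]
  {a b : ℝ} {Z : ℕ → Ω → ℝ}

lemma ae_empMean_eq_of_variance_eq_zero (hmeas : ∀ i, Measurable (Z i))
    (hident : ∀ i, IdentDistrib (Z i) (Z 0) P P) (hbdd : ∀ᵐ ω ∂P, Z 0 ω ∈ Set.Icc a b)
    (hσ : variance (Z 0) P = 0) {m : ℕ} (hm : m ≠ 0) :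
    ∀ᵐ ω ∂P, empMean Z m ω = P[Z 0] := by
  have h0 := ae_eq_integral_of_variance_eq_zero
    (memLp_of_bounded hbdd (hmeas 0).aestronglyMeasurable 2) hσ
  have hall : ∀ᵐ ω ∂P, ∀ i, Z i ω = P[Z 0] :=
    ae_all_iff.2 fun i => (hident i).symm.ae_snd (p := (· = P[Z 0])) (measurableSet_singleton _) h0
  filter_upwards [hall] with ω hω
  simp [empMean, hω, hm]

variable (hmeas : ∀ i, Measurable (Z i)) (hindep : iIndepFun Z P)
  (hident : ∀ i, IdentDistrib (Z i) (Z 0) P P) (hbdd : ∀ᵐ ω ∂P, Z 0 ω ∈ Set.Icc a b)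
include hmeas hindep hident hbdd

theorem measure_le_empMean_sub_le_of_mem_Icc (hσ : 0 < variance (Z 0) P) {m : ℕ} (hm : 0 < m)
    {L : ℝ} (hL : 0 < L) :
    P {ω | √(2 * variance (Z 0) P * (L / m)) + (b - a) * (L / m) / 3 ≤ empMean Z m ω - P[Z 0]}
      ≤ ENNReal.ofReal (exp (-L)) := by
  have hμ := (convex_Icc a b).integral_mem isClosed_Icc hbdd
    ((memLp_of_bounded hbdd (hmeas 0).aestronglyMeasurable 1).integrable le_rfl)
  refine measure_le_empMean_sub_le hmeas hindep hident
    (memLp_of_bounded hbdd (hmeas 0).aestronglyMeasurable 2) le_rfl hσ ?_ (by linarith [hμ.1, hμ.2])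
    hm hL
  filter_upwards [hbdd] with ω hω
  linarith [hω.2, hμ.1]

theorem measure_le_sub_empMean_le_of_mem_Icc (hσ : 0 < variance (Z 0) P) {m : ℕ} (hm : 0 < m)
    {L : ℝ} (hL : 0 < L) :
    P {ω | √(2 * variance (Z 0) P * (L / m)) + (b - a) * (L / m) / 3 ≤ P[Z 0] - empMean Z m ω}
      ≤ ENNReal.ofReal (exp (-L)) := by
  have h := measure_le_empMean_sub_le_of_mem_Icc (Z := fun i ω => -Z i ω) (a := -b) (b := -a)
    (fun i => (hmeas i).neg) (hindep.comp (fun _ y => -y) fun _ => measurable_neg)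
    (fun i => (hident i).comp measurable_neg)
    (hbdd.mono fun ω hω => ⟨neg_le_neg hω.2, neg_le_neg hω.1⟩) (by rwa [variance_fun_neg]) hm hL
  simpa only [variance_fun_neg, integral_neg, empMean_neg, neg_sub_neg] using h

theorem measure_le_variance_sub_empMean_sq_le_of_mem_Icc (hσ : 0 < variance (Z 0) P) {m : ℕ}
    (hm : 0 < m) {L : ℝ} (hL : 0 < L) :
    P {ω | √(2 * ((b - a) ^ 2 * variance (Z 0) P) * (L / m)) + variance (Z 0) P * (L / m) / 3
        ≤ variance (Z 0) P - empMean (fun i ω => (Z i ω - P[Z 0]) ^ 2) m ω}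
      ≤ ENNReal.ofReal (exp (-L)) := by
  set μ := P[Z 0]
  set σ2 := variance (Z 0) P
  have hμ := (convex_Icc a b).integral_mem isClosed_Icc hbdd
    ((memLp_of_bounded hbdd (hmeas 0).aestronglyMeasurable 1).integrable le_rfl)
  have hdev : ∀ᵐ ω ∂P, |Z 0 ω - μ| ≤ b - a := hbdd.mono fun ω hω =>
    abs_sub_le_iff.2 ⟨by linarith [hω.2, hμ.1], by linarith [hω.1, hμ.2]⟩
  have hσ2 : σ2 = P[fun ω => (Z 0 ω - μ) ^ 2] := variance_eq_integral (hmeas 0).aemeasurable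
  have hsqdev : Measurable fun y : ℝ => -(y - μ) ^ 2 := by fun_prop
  have hWmeas : ∀ i, Measurable fun ω => -(Z i ω - μ) ^ 2 := fun i => hsqdev.comp (hmeas i)
  have hW : MemLp (fun ω => -(Z 0 ω - μ) ^ 2) 2 P := by
    refine memLp_of_bounded (a := -(b - a) ^ 2) (b := 0) (hdev.mono fun ω hω => ⟨?_, ?_⟩)
      (hWmeas 0).aestronglyMeasurable 2
    · simpa only [neg_le_neg_iff, sq_abs] using pow_le_pow_left₀ (abs_nonneg _) hω 2
    · exact neg_nonpos.2 (sq_nonneg _)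
  have hWvar : variance (fun ω => -(Z 0 ω - μ) ^ 2) P ≤ (b - a) ^ 2 * σ2 := by
    rw [variance_fun_neg, hσ2]
    exact variance_sq_le_of_abs_le ((hmeas 0).sub_const μ).aemeasurable hdev
  have hWmean : P[fun ω => -(Z 0 ω - μ) ^ 2] = -σ2 := by rw [integral_neg, hσ2]
  have hv : 0 < (b - a) ^ 2 * σ2 := by
    have := variance_le_sq_of_bounded hbdd (hmeas 0).aemeasurable
    nlinarith
  have h := measure_le_empMean_sub_le hWmeas (hindep.comp (fun _ => _) fun _ => hsqdev)
    (fun i => (hident i).comp hsqdev) hW hWvar hv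
    (ae_of_all _ fun ω => by rw [hWmean]; linarith [sq_nonneg (Z 0 ω - μ)]) hσ.le hm hL
  simpa only [hWmean, empMean_neg, sub_neg_eq_add, neg_add_eq_sub] using h

theorem measure_lt_abs_empMean_sub_le {m : ℕ} (hm : 0 < m) {L : ℝ} (hL : 0 < L) :
    P {ω | √(2 * empVar Z m ω * L / m) + 3 * (b - a) * L / m < |empMean Z m ω - P[Z 0]|}
      ≤ ENNReal.ofReal (3 * exp (-L)) := by
  have hab : a ≤ b := by
    obtain ⟨ω, hω⟩ := hbdd.exists
    exact hω.1.trans hω.2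
  rcases (variance_nonneg (Z 0) P).eq_or_lt with hσ | hσ
  · refine (measure_mono_null (fun ω hω heq => ?_) (ae_iff.1
      (ae_empMean_eq_of_variance_eq_zero hmeas hident hbdd hσ.symm hm.ne'))).trans_le zero_le
    rw [Set.mem_ofPred_eq, heq, sub_self, abs_zero] at hω
    have := sub_nonneg.2 hab
    exact hω.not_ge (by positivity)
  · have hup := measure_le_empMean_sub_le_of_mem_Icc hmeas hindep hident hbdd hσ hm hL
    have hlow := measure_le_sub_empMean_le_of_mem_Icc hmeas hindep hident hbdd hσ hm hL
    have hsq := measure_le_variance_sub_empMean_sq_le_of_mem_Icc hmeas hindep hident hbdd hσ hm hL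
    have hunion := (measure_union_le _ _).trans
      (add_le_add ((measure_union_le _ _).trans (add_le_add hup hlow)) hsq)
    refine (measure_mono fun ω hω => ?_).trans (hunion.trans_eq ?_)
    · by_contra hgood
      simp only [Set.mem_union, Set.mem_ofPred_eq, not_or, not_le] at hω hgood
      exact hω.not_ge (abs_empMean_sub_le_of_le hm.ne' hab hσ.le
        (variance_le_sq_of_bounded hbdd (hmeas 0).aemeasurable) hL.le hgood.1.1.le hgood.1.2.le
        hgood.2.le)
    · rw [← ENNReal.ofReal_add (by positivity) (by positivity),
        ← ENNReal.ofReal_add (by positivity) (by positivity)]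
      ring_nf

end BoundedIID

/-- empirical Bernstein concentration inequality: with probability
at least 1 - x, `|Z̄_m - E[Z]| ≤ sqrt(2 V̄_m log(3/x)/m) + 3(b-a) log(3/x)/m`. -/
theorem stmt_0 {Ω : Type*} {mΩ : MeasurableSpace Ω} (P : Measure Ω)
    [IsProbabilityMeasure P] (a b : ℝ) (Z : ℕ → Ω → ℝ)
    (hmeas : ∀ i, Measurable (Z i))
    (hindep : iIndepFun Z P)
    (hident : ∀ i, IdentDistrib (Z i) (Z 0) P P)
    (hbdd : ∀ i, ∀ᵐ ω ∂P, Z i ω ∈ Set.Icc a b)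
    (m : ℕ) (hm : 1 ≤ m) (x : ℝ) (hx : x ∈ Set.Ioo (0 : ℝ) 1) :
    ENNReal.ofReal (1 - x) ≤
      P {ω | |empMean Z m ω - ∫ ω', Z 0 ω' ∂P| ≤
        Real.sqrt (2 * empVar Z m ω * Real.log (3 / x) / m)
          + 3 * (b - a) * Real.log (3 / x) / m} := by
  obtain ⟨hx0, hx1⟩ := hx
  have hL : 0 < log (3 / x) := log_pos (by rw [lt_div_iff₀ hx0]; linarith)
  have hexp : 3 * exp (-log (3 / x)) = x := by
    rw [exp_neg, exp_log (by positivity)]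
    field_simp
  refine ofReal_one_sub_le_of_measure_compl_le hx0.le ?_
  simpa only [Set.compl_ofPred, not_le, hexp] using
    measure_lt_abs_empMean_sub_le hmeas hindep hident (hbdd 0) (by omega) hL
end

section
/- Let ε ∈ (0,1) and let z̄, μ, c be real numbers with c ≥ 0. If |z̄ - μ| ≤ c and c ≤ ε |z̄|, then the quantity ê = z̄ - ε · sign(z̄) · c satisfies |ê - μ| ≤ ε |μ|. -/
/-- sign(t) = 1 if t ≥ 0 and -1 if t < 0. -/
noncomputable def sign' (t : ℝ) : ℝ := if 0 ≤ t then 1 else -1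

theorem abs_sub_mul_sub_le_mul_abs {ε z μ c : ℝ} (hε₀ : 0 ≤ ε) (hε₁ : ε ≤ 1) (hz : 0 ≤ z)
    (hμ : |z - μ| ≤ c) (hc : c ≤ ε * z) : |z - ε * c - μ| ≤ ε * |μ| := by
  obtain ⟨hμ_ge, hμ_le⟩ := abs_le.mp hμ
  have hμ_nonneg : 0 ≤ μ := by nlinarith [mul_nonneg (sub_nonneg.2 hε₁) hz]
  rw [abs_of_nonneg hμ_nonneg, abs_le]
  constructor <;> nlinarith

theorem stmt_2_general (ε zbar μ c : ℝ) (hε : ε ∈ Set.Ioo (0 : ℝ) 1)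
    (h1 : |zbar - μ| ≤ c) (h2 : c ≤ ε * |zbar|) :
    |(zbar - ε * sign' zbar * c) - μ| ≤ ε * |μ| := by
  unfold sign'
  split_ifs with hz
  · rw [abs_of_nonneg hz] at h2
    simpa only [mul_one] using abs_sub_mul_sub_le_mul_abs hε.1.le hε.2.le hz h1 h2
  · rw [abs_of_neg (not_le.1 hz)] at h2
    have h1' : |-zbar - -μ| ≤ c := by rwa [← abs_neg, neg_sub_neg, neg_sub]
    have h := abs_sub_mul_sub_le_mul_abs hε.1.le hε.2.le (by linarith) h1' h2
    rwa [abs_neg, ← abs_neg, show -(-zbar - ε * c - -μ) = zbar - ε * -1 * c - μ by ring] at h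

/-- deterministic core of the relative-precision guarantee. -/
theorem stmt_2 (ε zbar μ c : ℝ) (hε : ε ∈ Set.Ioo (0 : ℝ) 1) (hc : 0 ≤ c)
    (h1 : |zbar - μ| ≤ c) (h2 : c ≤ ε * |zbar|) :
    |(zbar - ε * sign' zbar * c) - μ| ≤ ε * |μ| :=
  stmt_2_general ε zbar μ c hε h1 h2
end

section
/- Let 0 < δ ≤ 3/4, ε ∈ (0,1), p > 1 and c = (p-1)/p, and let Z be a random variable taking values in [a,b] with mean μ = E[Z] ≠ 0 and variance σ² = V[Z]. With d_m = δ c m^{-p}, define M = min{ m ≥ 1 : c_m ≤ ε |Z̄_m| }. Then, with ν = min( max(σ², ε²μ²)/(b-a)² , ε²μ² / ((1+ε)² max(σ², ε²μ²) γ) ) where γ = (sqrt(2 + 2√2 + 2/3) + 3)², one has P( M > ⌈ (2/ν)( p log(2p/ν) + log(3/(cδ)) ) ⌉ ) ≤ 4δ/3. -/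
/-
Put `v = max(σ², ε²μ²)`, `L = log(3/(cδ))` and `m = ⌈(2/ν)(p log(2p/ν) + L)⌉`.
Since `p log m ≤ mν/2 + p log(2p/ν)`, this `m` satisfies `2L ≤ mν` and
`log(3/d_m) = L + p log m ≤ mν`. Bernstein's inequality for `Z_i - μ`, `μ - Z_i` and
`(Z_i - μ)² - σ²` shows that, outside an event of probability `3e^{-L} = cδ`,
`|Z̄_m - μ| ≤ √(vν) + (b-a)ν/6` and `V̄_m ≤ 13v/6`, so that
`c_m ≤ √(13/3)·√(vν) + 3(b-a)ν`. The two terms of the minimum defining `ν` give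
`(b-a)²ν ≤ v` and `(1+ε)√γ·√(vν) ≤ ε|μ|`; as `√γ ≥ √(13/3) + 3`, this bounds `c_m` by
`ε|Z̄_m|`, so `M ≤ m`.
-/

open MeasureTheory ProbabilityTheory

/-- Half-length `c_m = sqrt(2 V̄_m log(3/d_m)/m) + 3(b-a) log(3/d_m)/m` of the
confidence interval of level `1 - d_m`. -/
noncomputable def confRad {Ω : Type*} (a b : ℝ) (d : ℕ → ℝ) (Z : ℕ → Ω → ℝ)
    (m : ℕ) (ω : Ω) : ℝ :=
  Real.sqrt (2 * empVar Z m ω * Real.log (3 / d m) / m)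
    + 3 * (b - a) * Real.log (3 / d m) / m

/-- The stopping "time" `M = min{ m ≥ 1 : c_m ≤ ε |Z̄_m| }`. -/
noncomputable def Mstop {Ω : Type*} (a b : ℝ) (d : ℕ → ℝ) (Z : ℕ → Ω → ℝ)
    (ε : ℝ) (ω : Ω) : ℕ :=
  sInf {m : ℕ | 1 ≤ m ∧ confRad a b d Z m ω ≤ ε * |empMean Z m ω|}

open Real Finset

theorem Real.exp_le_one_add_add_sq_div {x u : ℝ} (hx : |x| ≤ u) (hu : u ≤ 1) :
    exp x ≤ 1 + x + x ^ 2 / (2 * (1 - u / 3)) := by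
  have hu0 : 0 ≤ u := (abs_nonneg x).trans hx
  have htaylor := (abs_le.mp (exp_bound (hx.trans hu) (n := 4) (by norm_num))).2
  norm_num [sum_range_succ, Nat.factorial] at htaylor
  have hx2 : x ^ 2 ≤ u ^ 2 := sq_le_sq' (abs_le.mp hx).1 (abs_le.mp hx).2
  have hx3 : x ^ 3 ≤ x ^ 2 * u := by nlinarith [sq_nonneg x, le_abs_self x]
  have hx4 : |x| ^ 4 ≤ x ^ 2 * u ^ 2 := by
    rw [show |x| ^ 4 = x ^ 2 * x ^ 2 by rw [← sq_abs x]; ring]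
    exact mul_le_mul_of_nonneg_left hx2 (sq_nonneg x)
  have hcoef : 1 / 2 + u / 6 + 5 * u ^ 2 / 96 ≤ 1 / (2 * (1 - u / 3)) := by
    rw [le_div_iff₀ (by linarith)]
    nlinarith [pow_nonneg hu0 3]
  calc exp x ≤ 1 + x + x ^ 2 * (1 / 2 + u / 6 + 5 * u ^ 2 / 96) := by nlinarith
    _ ≤ 1 + x + x ^ 2 * (1 / (2 * (1 - u / 3))) := by gcongr
    _ = 1 + x + x ^ 2 / (2 * (1 - u / 3)) := by ring

theorem Real.log_le_div_add_log {x y : ℝ} (hx : 0 < x) (hy : 0 < y) :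
    log x ≤ x / y + log y := by
  have := log_le_sub_one_of_pos (div_pos hx hy)
  rw [log_div hx.ne' hy.ne'] at this
  linarith

theorem Real.log_div_mul_rpow_neg {y k x p : ℝ} (hy : 0 < y) (hk : 0 < k) (hx : 0 < x) :
    log (y / (k * x ^ (-p))) = log (y / k) + p * log x := by
  rw [rpow_neg hx.le, ← div_div, div_inv_eq_mul, log_mul (by positivity) (by positivity),
    log_rpow hx]

theorem exists_bernstein_exponent_eq {w b L : ℝ} (hw : 0 < w) (hb : 0 < b) (hL : 0 < L)
    (hLw : 2 * L * b ^ 2 ≤ w) :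
    ∃ t, 0 ≤ t ∧ t * b ≤ 1 ∧
      w * t ^ 2 / (2 * (1 - t * b / 3)) - t * (√(2 * w * L) + b * L / 3) = -L := by
  set r := √(2 * L / w)
  have hr0 : 0 ≤ r := sqrt_nonneg _
  have hr : w * r ^ 2 = 2 * L := by
    rw [sq_sqrt (by positivity)]; field_simp
  have hsqrt : √(2 * w * L) = w * r := by
    rw [show 2 * w * L = (w * r) ^ 2 by linear_combination (-w) * hr]
    exact sqrt_sq (by positivity)
  have hbr : b * r ≤ 1 := by
    have : w * (b * r) ^ 2 ≤ w * 1 := by linear_combination b ^ 2 * hr + hLw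
    nlinarith [le_of_mul_le_mul_left this hw]
  -- the minimiser of the Bernstein exponent
  refine ⟨r / (1 + b * r / 3), by positivity, ?_, ?_⟩
  · rw [div_mul_eq_mul_div, div_le_one (by positivity)]; linarith
  · rw [hsqrt]
    field_simp
    linear_combination (-9) * hr

noncomputable def bernsteinDev (v b L : ℝ) (m : ℕ) : ℝ := √(2 * v * m * L) + b * L / 3

section Bernstein

variable {Ω : Type*} {mΩ : MeasurableSpace Ω} {P : Measure Ω} [IsProbabilityMeasure P]

theorem mgf_le_exp_of_abs_le {X : Ω → ℝ} (hX : AEMeasurable X P) {b v t : ℝ}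
    (hbdd : ∀ᵐ ω ∂P, |X ω| ≤ b) (hmean : P[X] = 0) (hvar : ∫ ω, X ω ^ 2 ∂P ≤ v)
    (ht : 0 ≤ t) (htb : t * b ≤ 1) :
    mgf X P t ≤ exp (v * t ^ 2 / (2 * (1 - t * b / 3))) := by
  set κ := t ^ 2 / (2 * (1 - t * b / 3))
  have hκ : 0 ≤ κ := div_nonneg (sq_nonneg t) (by linarith)
  have hint : Integrable X P :=
    .of_bound hX.aestronglyMeasurable b (by simpa only [norm_eq_abs] using hbdd)
  have hint2 : Integrable (fun ω => X ω ^ 2) P := by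
    refine .of_bound (hX.pow_const 2).aestronglyMeasurable (b ^ 2) (hbdd.mono fun ω hω => ?_)
    rw [norm_pow, norm_eq_abs]
    exact pow_le_pow_left₀ (abs_nonneg _) hω 2
  have hpt : ∀ᵐ ω ∂P, exp (t * X ω) ≤ 1 + t * X ω + κ * X ω ^ 2 := by
    filter_upwards [hbdd] with ω hω
    have h := exp_le_one_add_add_sq_div (x := t * X ω) (u := t * b)
      (by rw [abs_mul, abs_of_nonneg ht]; exact mul_le_mul_of_nonneg_left hω ht) htb
    rwa [mul_pow, mul_div_right_comm] at h
  have hint1 : Integrable (fun ω => 1 + t * X ω) P := (integrable_const 1).add (hint.const_mul t)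
  calc mgf X P t ≤ ∫ ω, (1 + t * X ω + κ * X ω ^ 2) ∂P :=
        integral_mono_of_nonneg (.of_forall fun _ => (exp_pos _).le)
          (hint1.add (hint2.const_mul κ)) hpt
    _ = 1 + κ * ∫ ω, X ω ^ 2 ∂P := by
        rw [integral_add hint1 (hint2.const_mul κ),
          integral_add (integrable_const 1) (hint.const_mul t), integral_const_mul,
          integral_const_mul, hmean]
        simp
    _ ≤ 1 + v * t ^ 2 / (2 * (1 - t * b / 3)) := by
        rw [mul_div_assoc, mul_comm v]; gcongr
    _ ≤ exp (v * t ^ 2 / (2 * (1 - t * b / 3))) := by rw [add_comm]; exact add_one_le_exp _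

theorem measure_bernsteinDev_le_sum {X : ℕ → Ω → ℝ} (hmeas : ∀ i, Measurable (X i))
    (hind : iIndepFun X P) {b v L : ℝ} {m : ℕ} (hb : 0 < b) (hv : 0 < v) (hL : 0 < L)
    (hm : 0 < m) (hLm : 2 * L * b ^ 2 ≤ m * v) (hbdd : ∀ i, ∀ᵐ ω ∂P, |X i ω| ≤ b)
    (hmean : ∀ i, P[X i] = 0) (hvar : ∀ i, ∫ ω, X i ω ^ 2 ∂P ≤ v) :
    P {ω | bernsteinDev v b L m ≤ ∑ i ∈ range m, X i ω} ≤ ENNReal.ofReal (exp (-L)) := by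
  obtain ⟨t, ht, htb, hexp⟩ :=
    exists_bernstein_exponent_eq (by positivity : (0 : ℝ) < m * v) hb hL hLm
  have hint : ∀ i, Integrable (fun ω => exp (t * X i ω)) P := fun i =>
    .of_bound ((hmeas i).const_mul t).exp.aestronglyMeasurable (exp (t * b)) <|
      (hbdd i).mono fun ω hω => by
        rw [norm_of_nonneg (exp_pos _).le, exp_le_exp]
        exact mul_le_mul_of_nonneg_left ((le_abs_self _).trans hω) ht
  have hmgf : mgf (∑ i ∈ range m, X i) P t ≤ exp (m * v * t ^ 2 / (2 * (1 - t * b / 3))) := by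
    rw [hind.mgf_sum hmeas]
    calc ∏ i ∈ range m, mgf (X i) P t
        ≤ ∏ _i ∈ range m, exp (v * t ^ 2 / (2 * (1 - t * b / 3))) :=
          prod_le_prod (fun _ _ => mgf_nonneg) fun i _ =>
            mgf_le_exp_of_abs_le (hmeas i).aemeasurable (hbdd i) (hmean i) (hvar i) ht htb
      _ = exp (m * v * t ^ 2 / (2 * (1 - t * b / 3))) := by
          rw [prod_const, card_range, ← exp_nat_mul]; ring_nf
  have hchernoff := measure_ge_le_exp_mul_mgf (bernsteinDev v b L m) ht
    (hind.integrable_exp_mul_sum hmeas (s := range m) fun i _ => hint i)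
  simp only [Finset.sum_apply] at hchernoff
  rw [← ENNReal.ofReal_toReal (measure_ne_top P _)]
  refine ENNReal.ofReal_le_ofReal (hchernoff.trans ?_)
  calc exp (-t * bernsteinDev v b L m) * mgf (∑ i ∈ range m, X i) P t
      ≤ exp (-t * bernsteinDev v b L m) * exp (m * v * t ^ 2 / (2 * (1 - t * b / 3))) := by
        gcongr
    _ = exp (-L) := by
        rw [← exp_add, ← hexp, bernsteinDev]; ring_nf

theorem measure_bernsteinDev_le_abs_sum {X : ℕ → Ω → ℝ} (hmeas : ∀ i, Measurable (X i))
    (hind : iIndepFun X P) {b v L : ℝ} {m : ℕ} (hb : 0 < b) (hv : 0 < v) (hL : 0 < L)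
    (hm : 0 < m) (hLm : 2 * L * b ^ 2 ≤ m * v) (hbdd : ∀ i, ∀ᵐ ω ∂P, |X i ω| ≤ b)
    (hmean : ∀ i, P[X i] = 0) (hvar : ∀ i, ∫ ω, X i ω ^ 2 ∂P ≤ v) :
    P {ω | bernsteinDev v b L m ≤ |∑ i ∈ range m, X i ω|}
      ≤ ENNReal.ofReal (2 * exp (-L)) := by
  have hneg := measure_bernsteinDev_le_sum (X := fun i ω => -X i ω) (fun i => (hmeas i).neg)
    (hind.comp (fun _ => Neg.neg) fun _ => measurable_neg) hb hv hL hm hLm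
    (fun i => by simpa only [abs_neg] using hbdd i)
    (fun i => by simp only [integral_neg, hmean i, neg_zero])
    (fun i => by simpa only [neg_sq] using hvar i)
  calc P {ω | bernsteinDev v b L m ≤ |∑ i ∈ range m, X i ω|}
      ≤ P ({ω | bernsteinDev v b L m ≤ ∑ i ∈ range m, X i ω}
          ∪ {ω | bernsteinDev v b L m ≤ ∑ i ∈ range m, -X i ω}) := by
        refine measure_mono fun ω hω => ?_
        simpa only [Set.mem_union, Set.mem_ofPred_eq, sum_neg_distrib, le_abs] using hω
    _ ≤ ENNReal.ofReal (exp (-L)) + ENNReal.ofReal (exp (-L)) :=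
        (measure_union_le _ _).trans (add_le_add
          (measure_bernsteinDev_le_sum hmeas hind hb hv hL hm hLm hbdd hmean hvar) hneg)
    _ = ENNReal.ofReal (2 * exp (-L)) := by
        rw [← ENNReal.ofReal_add (exp_pos _).le (exp_pos _).le, two_mul]

section Bounded

variable {Y : Ω → ℝ} {a b : ℝ}

theorem ae_abs_sub_integral_le (hY : AEMeasurable Y P) (h : ∀ᵐ ω ∂P, Y ω ∈ Set.Icc a b) :
    ∀ᵐ ω ∂P, |Y ω - P[Y]| ≤ b - a := by
  have hmean : P[Y] ∈ Set.Icc a b :=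
    (convex_Icc a b).integral_mem isClosed_Icc h (.of_mem_Icc a b hY h)
  filter_upwards [h] with ω hω
  exact abs_sub_le_iff.2 ⟨by linarith [hω.2, hmean.1], by linarith [hω.1, hmean.2]⟩

theorem ae_abs_sub_integral_sq_sub_variance_le (hY : AEMeasurable Y P)
    (h : ∀ᵐ ω ∂P, Y ω ∈ Set.Icc a b) :
    ∀ᵐ ω ∂P, |(Y ω - P[Y]) ^ 2 - variance Y P| ≤ (b - a) ^ 2 := by
  have hvar : variance Y P ≤ (b - a) ^ 2 := by
    have := variance_le_sq_of_bounded h hY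
    nlinarith
  filter_upwards [ae_abs_sub_integral_le hY h] with ω hω
  have hsq : (Y ω - P[Y]) ^ 2 ≤ (b - a) ^ 2 := sq_le_sq' (abs_le.mp hω).1 (abs_le.mp hω).2
  rw [abs_le]
  constructor <;> nlinarith [sq_nonneg (Y ω - P[Y]), variance_nonneg Y P]

theorem integral_sq_sub_variance_sq_le (hY : AEMeasurable Y P)
    (h : ∀ᵐ ω ∂P, Y ω ∈ Set.Icc a b) :
    ∫ ω, ((Y ω - P[Y]) ^ 2 - variance Y P) ^ 2 ∂P ≤ (b - a) ^ 2 * variance Y P := by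
  set W : Ω → ℝ := fun ω => (Y ω - P[Y]) ^ 2
  have hW : AEMeasurable W P := (hY.sub_const _).pow_const 2
  have hWmean : P[W] = variance Y P := (variance_eq_integral hY).symm
  have hWbdd : ∀ᵐ ω ∂P, W ω ∈ Set.Icc 0 ((b - a) ^ 2) :=
    (ae_abs_sub_integral_le hY h).mono fun ω hω =>
      ⟨sq_nonneg _, sq_le_sq' (abs_le.mp hω).1 (abs_le.mp hω).2⟩
  calc ∫ ω, (W ω - variance Y P) ^ 2 ∂P = variance W P := by
        rw [variance_eq_integral hW, hWmean]
    _ ≤ P[W ^ 2] := variance_le_expectation_sq hW.aestronglyMeasurable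
    _ ≤ ∫ ω, (b - a) ^ 2 * W ω ∂P := by
        refine integral_mono_ae ?_ ?_ (hWbdd.mono fun ω hω => ?_)
        · exact (memLp_of_bounded hWbdd hW.aestronglyMeasurable 2).integrable_sq
        · exact (Integrable.of_mem_Icc 0 _ hW hWbdd).const_mul _
        · simp only [Pi.pow_apply]
          nlinarith [hω.1, hω.2]
    _ = (b - a) ^ 2 * variance Y P := by rw [integral_const_mul, hWmean]

end Bounded

theorem measure_bernsteinDev_le_abs_sum_sub {Z : ℕ → Ω → ℝ} (hmeas : ∀ i, Measurable (Z i))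
    (hindep : iIndepFun Z P) {a b μ v L : ℝ} {m : ℕ} (hab : a < b)
    (hbdd : ∀ i, ∀ᵐ ω ∂P, Z i ω ∈ Set.Icc a b) (hmean : ∀ i, P[Z i] = μ)
    (hvar : ∀ i, variance (Z i) P ≤ v) (hv : 0 < v) (hL : 0 < L) (hm : 0 < m)
    (hLm : 2 * L * (b - a) ^ 2 ≤ m * v) :
    P {ω | bernsteinDev v (b - a) L m ≤ |∑ i ∈ range m, (Z i ω - μ)|}
      ≤ ENNReal.ofReal (2 * exp (-L)) :=
  measure_bernsteinDev_le_abs_sum (X := fun i ω => Z i ω - μ) (fun i => (hmeas i).sub_const μ)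
    (hindep.comp _ fun _ => measurable_id.sub_const μ) (sub_pos.2 hab) hv hL hm hLm
    (fun i => hmean i ▸ ae_abs_sub_integral_le (hmeas i).aemeasurable (hbdd i))
    (fun i => by
      rw [integral_sub (.of_mem_Icc a b (hmeas i).aemeasurable (hbdd i)) (integrable_const μ),
        hmean i]
      simp)
    (fun i => by rw [← hmean i, ← variance_eq_integral (hmeas i).aemeasurable]; exact hvar i)

theorem measure_bernsteinDev_le_sum_sq_sub {Z : ℕ → Ω → ℝ} (hmeas : ∀ i, Measurable (Z i))
    (hindep : iIndepFun Z P) {a b μ σ2 v L : ℝ} {m : ℕ} (hab : a < b)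
    (hbdd : ∀ i, ∀ᵐ ω ∂P, Z i ω ∈ Set.Icc a b) (hmean : ∀ i, P[Z i] = μ)
    (hvar : ∀ i, variance (Z i) P = σ2) (hσv : σ2 ≤ v) (hv : 0 < v) (hL : 0 < L) (hm : 0 < m)
    (hLm : 2 * L * (b - a) ^ 2 ≤ m * v) :
    P {ω | bernsteinDev ((b - a) ^ 2 * v) ((b - a) ^ 2) L m
      ≤ ∑ i ∈ range m, ((Z i ω - μ) ^ 2 - σ2)} ≤ ENNReal.ofReal (exp (-L)) := by
  have hR : 0 < (b - a) ^ 2 := pow_pos (sub_pos.2 hab) 2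
  refine measure_bernsteinDev_le_sum (X := fun i ω => (Z i ω - μ) ^ 2 - σ2)
    (fun i => ((hmeas i).sub_const μ).pow_const 2 |>.sub_const σ2)
    (hindep.comp _ fun _ => ((measurable_id.sub_const μ).pow_const 2).sub_const σ2)
    hR (mul_pos hR hv) hL hm (by nlinarith) (fun i => ?_) (fun i => ?_) (fun i => ?_)
  · simpa only [hmean i, hvar i] using
      ae_abs_sub_integral_sq_sub_variance_le (hmeas i).aemeasurable (hbdd i)
  · have hint : Integrable (fun ω => (Z i ω - μ) ^ 2) P :=
      ((memLp_of_bounded (hbdd i) (hmeas i).aestronglyMeasurable 2).sub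
        (memLp_const μ)).integrable_sq
    rw [integral_sub hint (integrable_const σ2), ← hmean i,
      ← variance_eq_integral (hmeas i).aemeasurable, hvar i]
    simp
  · have := integral_sq_sub_variance_sq_le (hmeas i).aemeasurable (hbdd i)
    rw [hmean i, hvar i] at this
    exact this.trans (by gcongr)

theorem measure_deviation_union_le {Z : ℕ → Ω → ℝ} (hmeas : ∀ i, Measurable (Z i))
    (hindep : iIndepFun Z P) (hident : ∀ i, IdentDistrib (Z i) (Z 0) P P) {a b : ℝ}
    (hab : a < b) (hbdd : ∀ i, ∀ᵐ ω ∂P, Z i ω ∈ Set.Icc a b) {μ σ2 v L : ℝ}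
    {m : ℕ} (hμ : μ = P[Z 0]) (hσ2 : σ2 = variance (Z 0) P) (hσv : σ2 ≤ v) (hv : 0 < v)
    (hL : 0 < L) (hm : 0 < m) (hLm : 2 * L * (b - a) ^ 2 ≤ m * v) :
    P ({ω | bernsteinDev v (b - a) L m ≤ |∑ i ∈ range m, (Z i ω - μ)|} ∪
      {ω | bernsteinDev ((b - a) ^ 2 * v) ((b - a) ^ 2) L m
        ≤ ∑ i ∈ range m, ((Z i ω - μ) ^ 2 - σ2)}) ≤ ENNReal.ofReal (3 * exp (-L)) := by
  have hmean : ∀ i, P[Z i] = μ := fun i => hμ ▸ (hident i).integral_eq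
  have hvar : ∀ i, variance (Z i) P = σ2 := fun i => hσ2 ▸ (hident i).variance_eq
  calc _ ≤ _ := measure_union_le _ _
    _ ≤ ENNReal.ofReal (2 * exp (-L)) + ENNReal.ofReal (exp (-L)) := add_le_add
        (measure_bernsteinDev_le_abs_sum_sub hmeas hindep hab hbdd hmean
          (fun i => (hvar i).trans_le hσv) hv hL hm hLm)
        (measure_bernsteinDev_le_sum_sq_sub hmeas hindep hab hbdd hmean hvar hσv hv hL hm hLm)
    _ = ENNReal.ofReal (3 * exp (-L)) := by
        rw [← ENNReal.ofReal_add (by positivity) (exp_pos _).le]; ring_nf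

end Bernstein

section Empirical

variable {Ω : Type*} (Z : ℕ → Ω → ℝ) (m : ℕ) (ω : Ω) (μ : ℝ)

theorem sum_sub_eq_mul_empMean_sub :
    ∑ i ∈ range m, (Z i ω - μ) = m * (empMean Z m ω - μ) := by
  rcases Nat.eq_zero_or_pos m with rfl | hm
  · simp
  · rw [empMean, sum_sub_distrib, sum_const, card_range, nsmul_eq_mul, mul_sub,
      mul_div_cancel₀ _ (Nat.cast_pos.2 hm).ne']

theorem empVar_le_sum_sq_div : empVar Z m ω ≤ (∑ i ∈ range m, (Z i ω - μ) ^ 2) / m := by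
  have hsplit : ∑ i ∈ range m, (Z i ω - empMean Z m ω) ^ 2
      = ∑ i ∈ range m, (Z i ω - μ) ^ 2 - m * (empMean Z m ω - μ) ^ 2 := by
    have h : ∀ i, (Z i ω - empMean Z m ω) ^ 2 = (Z i ω - μ) ^ 2
        - 2 * (empMean Z m ω - μ) * (Z i ω - μ) + (empMean Z m ω - μ) ^ 2 := fun i => by ring
    rw [sum_congr rfl fun i _ => h i, sum_add_distrib, sum_sub_distrib, ← mul_sum,
      sum_sub_eq_mul_empMean_sub, sum_const, card_range, nsmul_eq_mul]
    ring
  rw [empVar, hsplit]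
  gcongr
  exact sub_le_self _ (by positivity)

end Empirical

theorem bernsteinDev_le {v b L ν : ℝ} {m : ℕ} (hv : 0 ≤ v) (hb : 0 ≤ b)
    (hL : 2 * L ≤ m * ν) :
    bernsteinDev v b L m ≤ m * (√(v * ν) + b * ν / 6) := by
  have hsqrt : √(2 * v * m * L) ≤ m * √(v * ν) := calc
    √(2 * v * m * L) ≤ √(m ^ 2 * (v * ν)) :=
      sqrt_le_sqrt (by nlinarith [mul_le_mul_of_nonneg_left hL (mul_nonneg hv m.cast_nonneg)])
    _ = m * √(v * ν) := by rw [sqrt_mul (sq_nonneg _), sqrt_sq m.cast_nonneg]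
  rw [bernsteinDev]
  nlinarith [mul_le_mul_of_nonneg_left hL hb]

theorem confRad_le {Ω : Type*} {Z : ℕ → Ω → ℝ} {ω : Ω} {a b V ν : ℝ} {d : ℕ → ℝ}
    {m : ℕ} (hm : 0 < m) (hab : a ≤ b) (hV : empVar Z m ω ≤ V) (hd : 0 ≤ log (3 / d m))
    (hdm : log (3 / d m) ≤ m * ν) :
    confRad a b d Z m ω ≤ √(2 * V * ν) + 3 * (b - a) * ν := by
  have hm' : (0 : ℝ) < m := Nat.cast_pos.2 hm
  have hV0 : 0 ≤ empVar Z m ω := by rw [empVar]; positivity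
  rw [confRad]
  gcongr
  · rw [div_le_iff₀ hm']
    calc 2 * empVar Z m ω * log (3 / d m) ≤ 2 * V * (m * ν) := by gcongr; linarith
      _ = 2 * V * ν * m := by ring
  · rw [div_le_iff₀ hm']
    calc 3 * (b - a) * log (3 / d m) ≤ 3 * (b - a) * (m * ν) := by gcongr
      _ = 3 * (b - a) * ν * m := by ring

theorem radius_le_mul_abs_of_abs_sub_le {x μ B C ε s : ℝ} (hε : 0 ≤ ε)
    (hs : √(13 / 3) + 3 ≤ s) (hB : (1 + ε) * s * B ≤ ε * |μ|)
    (hC : (1 + ε) * s * C ≤ ε * |μ|) (hx : |x - μ| ≤ B + C / 6) :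
    √(13 / 3) * B + 3 * C ≤ ε * |x| := by
  have hs0 : 3 ≤ s := by linarith [sqrt_nonneg (13 / 3)]
  have hS : 0 < (1 + ε) * s := by positivity
  have hs3 : √(13 / 3) + 3 + 7 * ε / 6 ≤ (1 + ε) * s := by
    nlinarith [mul_le_mul_of_nonneg_left hs0 hε]
  set E := ε * |μ| / ((1 + ε) * s)
  have hE : 0 ≤ E := by positivity
  have hBE : B ≤ E := by rw [le_div_iff₀ hS]; linarith
  have hCE : C ≤ E := by rw [le_div_iff₀ hS]; linarith
  have hSE : (1 + ε) * s * E = ε * |μ| := mul_div_cancel₀ _ hS.ne'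
  have hμx : |μ| ≤ |x| + (B + C / 6) := by
    have := abs_sub_abs_le_abs_sub μ x
    rw [abs_sub_comm] at this
    linarith
  nlinarith [mul_le_mul_of_nonneg_left hBE (by positivity : 0 ≤ √(13 / 3) + ε),
    mul_le_mul_of_nonneg_left hCE (by positivity : 0 ≤ 3 + ε / 6),
    mul_le_mul_of_nonneg_right hs3 hE,
    mul_le_mul_of_nonneg_left hμx hε]

theorem confRad_le_mul_abs_empMean {Ω : Type*} {Z : ℕ → Ω → ℝ} {ω : Ω}
    {a b μ σ2 v ν ε s L : ℝ} {d : ℕ → ℝ} {m : ℕ} (hm : 0 < m) (hab : a ≤ b)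
    (hε : 0 ≤ ε) (hσv : σ2 ≤ v) (hν : 0 ≤ ν) (hRν : (b - a) ^ 2 * ν ≤ v)
    (hs : √(13 / 3) + 3 ≤ s) (hB : (1 + ε) * s * √(v * ν) ≤ ε * |μ|)
    (hC : (1 + ε) * s * ((b - a) * ν) ≤ ε * |μ|) (hL : 2 * L ≤ m * ν)
    (hd : 0 ≤ log (3 / d m)) (hdm : log (3 / d m) ≤ m * ν)
    (hdev : |∑ i ∈ range m, (Z i ω - μ)| < bernsteinDev v (b - a) L m)
    (hsq : ∑ i ∈ range m, ((Z i ω - μ) ^ 2 - σ2)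
      < bernsteinDev ((b - a) ^ 2 * v) ((b - a) ^ 2) L m) :
    confRad a b d Z m ω ≤ ε * |empMean Z m ω| := by
  have hm' : (0 : ℝ) < m := Nat.cast_pos.2 hm
  have hR : 0 ≤ b - a := sub_nonneg.2 hab
  have hv : 0 ≤ v := le_trans (by positivity) hRν
  have hmean : |empMean Z m ω - μ| ≤ √(v * ν) + (b - a) * ν / 6 := by
    have h := hdev.le.trans (bernsteinDev_le hv hR hL)
    rw [sum_sub_eq_mul_empMean_sub, abs_mul, Nat.abs_cast] at h
    exact le_of_mul_le_mul_left h hm'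
  have hRB : (b - a) * √(v * ν) ≤ v := calc
    (b - a) * √(v * ν) = √((b - a) ^ 2 * ν * v) := by
      rw [mul_assoc, sqrt_mul (sq_nonneg _), sqrt_sq hR, mul_comm ν]
    _ ≤ √(v * v) := sqrt_le_sqrt (mul_le_mul_of_nonneg_right hRν hv)
    _ = v := sqrt_mul_self hv
  -- `V̄_m ≤ σ² + (b - a) √(v ν) + (b - a)² ν / 6 ≤ 13 v / 6`
  have hvar : empVar Z m ω ≤ 13 / 6 * v := by
    have h := hsq.le.trans (bernsteinDev_le (by positivity) (sq_nonneg _) hL)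
    rw [sum_sub_distrib, sum_const, card_range, nsmul_eq_mul, mul_assoc, sqrt_mul (sq_nonneg _),
      sqrt_sq hR] at h
    refine (empVar_le_sum_sq_div Z m ω μ).trans ((div_le_iff₀ hm').2 ?_)
    nlinarith
  calc confRad a b d Z m ω ≤ √(2 * (13 / 6 * v) * ν) + 3 * ((b - a) * ν) := by
        rw [← mul_assoc 3]; exact confRad_le hm hab hvar hd hdm
    _ = √(13 / 3) * √(v * ν) + 3 * ((b - a) * ν) := by
        rw [← sqrt_mul (by norm_num)]; ring_nf
    _ ≤ ε * |empMean Z m ω| := radius_le_mul_abs_of_abs_sub_le hε hs hB hC hmean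

section Rate

/-- The rate `ν` of the complexity bound, with `R = b - a`. -/
noncomputable def complexityRate (σ2 μ ε R γ : ℝ) : ℝ :=
  min (max σ2 (ε ^ 2 * μ ^ 2) / R ^ 2)
    (ε ^ 2 * μ ^ 2 / ((1 + ε) ^ 2 * max σ2 (ε ^ 2 * μ ^ 2) * γ))

variable {σ2 μ ε R γ : ℝ}

theorem complexityRate_pos (hε : 0 < ε) (hμ : μ ≠ 0) (hR : R ≠ 0) (hγ : 0 < γ) :
    0 < complexityRate σ2 μ ε R γ := by
  have : 0 < ε ^ 2 * μ ^ 2 := by positivity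
  have : 0 < max σ2 (ε ^ 2 * μ ^ 2) := lt_max_of_lt_right this
  exact lt_min (by positivity) (by positivity)

theorem sq_mul_complexityRate_le (hR : R ≠ 0) :
    R ^ 2 * complexityRate σ2 μ ε R γ ≤ max σ2 (ε ^ 2 * μ ^ 2) := by
  rw [← le_div_iff₀' (by positivity)]
  exact min_le_left _ _

theorem mul_complexityRate_le (hε : 0 < ε) (hμ : μ ≠ 0) (hγ : 0 < γ) :
    (1 + ε) ^ 2 * γ * (max σ2 (ε ^ 2 * μ ^ 2) * complexityRate σ2 μ ε R γ)
      ≤ ε ^ 2 * μ ^ 2 := by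
  have hv : 0 < max σ2 (ε ^ 2 * μ ^ 2) := lt_max_of_lt_right (by positivity)
  rw [← mul_assoc, mul_right_comm _ γ, ← le_div_iff₀' (by positivity)]
  exact min_le_right _ _

theorem complexityRate_le_one (hε : 0 < ε) (hμ : μ ≠ 0) (hγ : 1 ≤ γ) :
    complexityRate σ2 μ ε R γ ≤ 1 := by
  have hv : ε ^ 2 * μ ^ 2 ≤ max σ2 (ε ^ 2 * μ ^ 2) := le_max_right _ _
  have h := mul_complexityRate_le (σ2 := σ2) (R := R) hε hμ (by linarith : 0 < γ)
  have hk : 1 ≤ (1 + ε) ^ 2 * γ :=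
    one_le_mul_of_one_le_of_one_le (one_le_pow₀ (by linarith)) hγ
  by_contra! hr
  have hv0 : 0 < max σ2 (ε ^ 2 * μ ^ 2) := lt_max_of_lt_right (by positivity)
  have h1 : max σ2 (ε ^ 2 * μ ^ 2) < max σ2 (ε ^ 2 * μ ^ 2) * complexityRate σ2 μ ε R γ :=
    lt_mul_of_one_lt_right hv0 hr
  have h2 := le_mul_of_one_le_left (mul_pos hv0 (by linarith)).le hk
  linarith

theorem mul_sqrt_mul_complexityRate_le (hε : 0 < ε) (hμ : μ ≠ 0) (hγ : 0 < γ) :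
    (1 + ε) * √γ * √(max σ2 (ε ^ 2 * μ ^ 2) * complexityRate σ2 μ ε R γ)
      ≤ ε * |μ| := by
  calc (1 + ε) * √γ * √(max σ2 (ε ^ 2 * μ ^ 2) * complexityRate σ2 μ ε R γ)
      = √((1 + ε) ^ 2 * γ * (max σ2 (ε ^ 2 * μ ^ 2) * complexityRate σ2 μ ε R γ)) := by
        rw [sqrt_mul (by positivity) (max _ _ * _), sqrt_mul (sq_nonneg _) γ,
          sqrt_sq (by positivity)]
    _ ≤ √((ε * |μ|) ^ 2) := by
        rw [mul_pow, sq_abs]; exact sqrt_le_sqrt (mul_complexityRate_le hε hμ hγ)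
    _ = ε * |μ| := sqrt_sq (by positivity)

theorem mul_mul_complexityRate_le (hε : 0 < ε) (hμ : μ ≠ 0) (hR : 0 < R) (hγ : 0 < γ) :
    (1 + ε) * √γ * (R * complexityRate σ2 μ ε R γ) ≤ ε * |μ| := by
  have hr := complexityRate_pos (σ2 := σ2) hε hμ hR.ne' hγ
  refine le_trans ?_ (mul_sqrt_mul_complexityRate_le (σ2 := σ2) (R := R) hε hμ hγ)
  gcongr
  rw [le_sqrt (by positivity) (by positivity), mul_pow, pow_two (complexityRate _ _ _ _ _),
    ← mul_assoc]
  exact mul_le_mul_of_nonneg_right (sq_mul_complexityRate_le hR.ne') hr.le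

end Rate

section SampleBound

noncomputable def sampleBound (p ν L : ℝ) : ℝ := 2 / ν * (p * log (2 * p / ν) + L)

variable {p ν L x : ℝ}

theorem sampleBound_pos (hp : 0 < p) (hν : 0 < ν) (hνp : ν ≤ 2 * p) (hL : 0 < L) :
    0 < sampleBound p ν L := by
  have : 0 ≤ log (2 * p / ν) := log_nonneg ((one_le_div hν).2 hνp)
  unfold sampleBound
  positivity

theorem two_mul_le_mul_of_sampleBound_le (hp : 0 < p) (hν : 0 < ν) (hνp : ν ≤ 2 * p)
    (hx : sampleBound p ν L ≤ x) : 2 * L ≤ x * ν := by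
  have : 0 ≤ p * log (2 * p / ν) := mul_nonneg hp.le (log_nonneg ((one_le_div hν).2 hνp))
  rw [sampleBound, div_mul_eq_mul_div, div_le_iff₀ hν] at hx
  linarith

theorem add_mul_log_le_mul_of_sampleBound_le (hp : 0 < p) (hν : 0 < ν) (hx0 : 0 < x)
    (hx : sampleBound p ν L ≤ x) : L + p * log x ≤ x * ν := by
  have hlog : p * log x ≤ p * (x / (2 * p / ν) + log (2 * p / ν)) :=
    mul_le_mul_of_nonneg_left (log_le_div_add_log hx0 (by positivity)) hp.le
  rw [sampleBound, div_mul_eq_mul_div, div_le_iff₀ hν] at hx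
  have : p * (x / (2 * p / ν)) = x * ν / 2 := by field_simp
  linarith

end SampleBound

theorem measure_lt_Mstop_le {Ω : Type*} {mΩ : MeasurableSpace Ω} {P : Measure Ω}
    [IsProbabilityMeasure P] {Z : ℕ → Ω → ℝ} (hmeas : ∀ i, Measurable (Z i))
    (hindep : iIndepFun Z P) (hident : ∀ i, IdentDistrib (Z i) (Z 0) P P) {a b : ℝ}
    (hab : a < b) (hbdd : ∀ i, ∀ᵐ ω ∂P, Z i ω ∈ Set.Icc a b) {μ σ2 ε γ ν L : ℝ}
    {d : ℕ → ℝ} {m : ℕ} (hμ : μ = P[Z 0]) (hμ0 : μ ≠ 0) (hσ2 : σ2 = variance (Z 0) P)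
    (hε : 0 < ε) (hγ : √(13 / 3) + 3 ≤ √γ) (hν : ν = complexityRate σ2 μ ε (b - a) γ)
    (hL : 0 < L) (hm : 0 < m) (hLm : 2 * L ≤ m * ν) (hd0 : 0 ≤ log (3 / d m))
    (hdm : log (3 / d m) ≤ m * ν) :
    P {ω | m < Mstop a b d Z ε ω} ≤ ENNReal.ofReal (3 * exp (-L)) := by
  have hR : 0 < b - a := sub_pos.2 hab
  have hγ0 : 0 < γ := sqrt_pos.1 (by linarith [sqrt_nonneg (13 / 3)])
  set v := max σ2 (ε ^ 2 * μ ^ 2)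
  have hRν : (b - a) ^ 2 * ν ≤ v := hν ▸ sq_mul_complexityRate_le hR.ne'
  have hB : (1 + ε) * √γ * √(v * ν) ≤ ε * |μ| :=
    hν ▸ mul_sqrt_mul_complexityRate_le hε hμ0 hγ0
  have hC : (1 + ε) * √γ * ((b - a) * ν) ≤ ε * |μ| :=
    hν ▸ mul_mul_complexityRate_le hε hμ0 hR hγ0
  have hν0 : 0 < ν := hν ▸ complexityRate_pos hε hμ0 hR.ne' hγ0
  have hsub : {ω | m < Mstop a b d Z ε ω} ⊆
      {ω | bernsteinDev v (b - a) L m ≤ |∑ i ∈ range m, (Z i ω - μ)|} ∪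
        {ω | bernsteinDev ((b - a) ^ 2 * v) ((b - a) ^ 2) L m
          ≤ ∑ i ∈ range m, ((Z i ω - μ) ^ 2 - σ2)} := fun ω hω => by
    by_contra hgood
    simp only [Set.mem_union, Set.mem_ofPred_eq, not_or, not_le] at hgood
    exact (Set.mem_ofPred_eq ▸ hω).not_ge <| Nat.sInf_le ⟨hm, confRad_le_mul_abs_empMean hm
      hab.le hε.le (le_max_left _ _) hν0.le hRν hγ hB hC hLm hd0 hdm hgood.1 hgood.2⟩
  refine (measure_mono hsub).trans <| measure_deviation_union_le hmeas hindep hident hab hbdd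
    hμ hσ2 (le_max_left _ _) (lt_max_of_lt_right (by positivity)) hL hm ?_
  nlinarith [mul_le_mul_of_nonneg_right hLm (sq_nonneg (b - a)),
    mul_le_mul_of_nonneg_left hRν m.cast_nonneg]

/-- complexity bound in probability for the stopping time of the
Monte-Carlo estimate with guaranteed relative precision. -/
theorem stmt_4 {Ω : Type*} {mΩ : MeasurableSpace Ω} (P : Measure Ω)
    [IsProbabilityMeasure P] (a b : ℝ) (hab : a < b) (Z : ℕ → Ω → ℝ)
    (hmeas : ∀ i, Measurable (Z i))
    (hindep : iIndepFun Z P)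
    (hident : ∀ i, IdentDistrib (Z i) (Z 0) P P)
    (hbdd : ∀ i, ∀ᵐ ω ∂P, Z i ω ∈ Set.Icc a b)
    (δ : ℝ) (hδ : 0 < δ) (hδ' : δ ≤ 3 / 4) (ε : ℝ) (hε : ε ∈ Set.Ioo (0 : ℝ) 1)
    (p c : ℝ) (hp : 1 < p) (hc : c = (p - 1) / p)
    (d : ℕ → ℝ) (hd : ∀ m : ℕ, 1 ≤ m → d m = δ * c * (m : ℝ) ^ (-p))
    (μ σ2 : ℝ) (hμ : μ = ∫ ω, Z 0 ω ∂P) (hμ0 : μ ≠ 0)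
    (hσ2 : σ2 = variance (Z 0) P)
    (γ ν : ℝ) (hγ : γ = (Real.sqrt (2 + 2 * Real.sqrt 2 + 2 / 3) + 3) ^ 2)
    (hν : ν = min (max σ2 (ε ^ 2 * μ ^ 2) / (b - a) ^ 2)
      (ε ^ 2 * μ ^ 2 / ((1 + ε) ^ 2 * max σ2 (ε ^ 2 * μ ^ 2) * γ))) :
    P {ω | (⌈2 / ν * (p * Real.log (2 * p / ν) + Real.log (3 / (c * δ)))⌉ : ℤ)
        < (Mstop a b d Z ε ω : ℤ)} ≤ ENNReal.ofReal (4 * δ / 3) := by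
  obtain ⟨hε, -⟩ := hε
  have hc0 : 0 < c := hc ▸ div_pos (by linarith) (by linarith)
  have hc1 : c < 1 := hc ▸ (div_lt_one (by linarith)).2 (by linarith)
  have hγ : √(13 / 3) + 3 ≤ √γ := by
    rw [hγ, sqrt_sq (by positivity)]
    gcongr
    nlinarith [one_le_sqrt.2 one_le_two]
  have hγ1 : 1 ≤ γ := one_le_sqrt.1 (by linarith [sqrt_nonneg (13 / 3)])
  change ν = complexityRate σ2 μ ε (b - a) γ at hν
  set L := log (3 / (c * δ))
  have hL : 0 < L := log_pos ((one_lt_div (by positivity)).2 (by nlinarith))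
  have hν0 : 0 < ν := hν ▸ complexityRate_pos hε hμ0 (sub_pos.2 hab).ne' (by linarith)
  have hνp : ν ≤ 2 * p := (hν ▸ complexityRate_le_one hε hμ0 hγ1).trans (by linarith)
  have hbound := sampleBound_pos (by linarith) hν0 hνp hL
  set m := ⌈sampleBound p ν L⌉₊
  have hm : 0 < m := Nat.ceil_pos.2 hbound
  have hdm : log (3 / d m) = L + p * log m := by
    rw [hd m hm, mul_comm δ c, log_div_mul_rpow_neg (by norm_num) (by positivity) (by positivity)]
  change P {ω | (⌈sampleBound p ν L⌉ : ℤ) < Mstop a b d Z ε ω} ≤ _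
  simp_rw [← Int.natCast_ceil_eq_ceil hbound.le, Nat.cast_lt]
  calc _ ≤ ENNReal.ofReal (3 * exp (-L)) :=
        measure_lt_Mstop_le hmeas hindep hident hab hbdd hμ hμ0 hσ2 hε hγ hν hL hm
          (two_mul_le_mul_of_sampleBound_le (by linarith) hν0 hνp (Nat.le_ceil _))
          (hdm ▸ add_nonneg hL.le (mul_nonneg (by linarith) (log_natCast_nonneg m)))
          (hdm ▸ add_mul_log_le_mul_of_sampleBound_le (by linarith) hν0 (by positivity)
            (Nat.le_ceil _))
    _ ≤ ENNReal.ofReal (4 * δ / 3) := by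
        rw [exp_neg, exp_log (by positivity), inv_div]
        exact ENNReal.ofReal_le_ofReal (by nlinarith)
end

section
/- Let Ξ be a nonempty finite set, τ ∈ (0,1), and set ε = τ/(2+τ). Let E, Ê : Ξ → ℝ be functions with E(ξ) ≠ 0 for all ξ, and suppose |E(ξ) - Ê(ξ)| ≤ ε |E(ξ)| for every ξ ∈ Ξ. Let ξ* maximize E over Ξ and let ξ̂ maximize Ê over Ξ. Then E(ξ*) - E(ξ̂) ≤ τ |E(ξ*)|. -/
/-! Comparing the two estimates through `Ê(ξ*) ≤ Ê(ξ̂)` gives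
`E(ξ*) - E(ξ̂) ≤ ε (|E(ξ*)| + |E(ξ̂)|)`, and `|E(ξ̂)| ≤ |E(ξ*)| + (E(ξ*) - E(ξ̂))`.
Solving the resulting linear inequality for the gap, `ε = τ/(2+τ)` is exactly the precision for
which the bound becomes `τ |E(ξ*)|`. -/

lemma sub_le_mul_abs_add_abs_of_abs_sub_le {a b a' b' ε : ℝ} (ha : |a - a'| ≤ ε * |a|)
    (hb : |b - b'| ≤ ε * |b|) (h : a' ≤ b') : a - b ≤ ε * (|a| + |b|) := by
  have ha' := (abs_le.mp ha).2
  have hb' := (abs_le.mp hb).1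
  linarith

lemma sub_le_mul_abs_of_sub_le_div_mul {a b τ : ℝ} (hτ : 0 ≤ τ) (hba : b ≤ a)
    (h : a - b ≤ τ / (2 + τ) * (|a| + |b|)) : a - b ≤ τ * |a| := by
  have hb : |b| ≤ |a| + (a - b) := by
    have := abs_sub_abs_le_abs_sub b a
    rw [abs_sub_comm, abs_of_nonneg (sub_nonneg.mpr hba)] at this
    linarith
  have h2τ : 0 < 2 + τ := by linarith
  have h' : (2 + τ) * (a - b) ≤ τ * (|a| + |b|) := by
    rwa [div_mul_eq_mul_div, le_div_iff₀' h2τ] at h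
  linarith [mul_le_mul_of_nonneg_left hb hτ]

theorem stmt_6_general {Ξ : Type*} (τ : ℝ)
    (hτ : τ ∈ Set.Ioo (0 : ℝ) 1) (E Ehat : Ξ → ℝ)
    (happrox : ∀ ξ, |E ξ - Ehat ξ| ≤ (τ / (2 + τ)) * |E ξ|)
    (ξstar ξhat : Ξ) (hstar : ∀ ξ, E ξ ≤ E ξstar) (hhat : ∀ ξ, Ehat ξ ≤ Ehat ξhat) :
    E ξstar - E ξhat ≤ τ * |E ξstar| :=
  sub_le_mul_abs_of_sub_le_div_mul hτ.1.le (hstar ξhat)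
    (sub_le_mul_abs_add_abs_of_abs_sub_le (happrox ξstar) (happrox ξhat) (hhat ξstar))

/-- deterministic core of the non-adaptive algorithm's correctness. -/
theorem stmt_6 {Ξ : Type*} [Fintype Ξ] [Nonempty Ξ] (τ : ℝ)
    (hτ : τ ∈ Set.Ioo (0 : ℝ) 1) (E Ehat : Ξ → ℝ) (hE : ∀ ξ, E ξ ≠ 0)
    (happrox : ∀ ξ, |E ξ - Ehat ξ| ≤ (τ / (2 + τ)) * |E ξ|)
    (ξstar ξhat : Ξ) (hstar : ∀ ξ, E ξ ≤ E ξstar) (hhat : ∀ ξ, Ehat ξ ≤ Ehat ξhat) :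
    E ξstar - E ξhat ≤ τ * |E ξstar| :=
  stmt_6_general τ hτ E Ehat happrox ξstar ξhat hstar hhat
end

section
/- Let Ξ be a nonempty finite set, τ ∈ (0,1), and set ε = τ/(2+τ). Let E, Ê : Ξ → ℝ be functions with E(ξ) ≠ 0 for all ξ, let ξ* maximize E over Ξ, and assume E(ξ*) > 0. Suppose |E(ξ) - Ê(ξ)| ≤ ε |E(ξ)| for every ξ ∈ Ξ, and let ξ̂ maximize Ê over Ξ. Then E(ξ̂) > 0, Ê(ξ̂) > 0, and E(ξ*) - E(ξ̂) ≤ (2ε/(1+ε)) |E(ξ*)|. -/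
/-!
A relative error ε < 1 cannot change the sign of a value, and puts the estimate of a positive
value `a` in `[(1 - ε) a, (1 + ε) a]`. Hence at the maximizer `ξ̂` of the estimate,
`(1 + ε) E(ξ̂) ≥ Ê(ξ̂) ≥ Ê(ξ*) ≥ (1 - ε) E(ξ*)`, and `1 - (1 - ε)/(1 + ε) = 2ε/(1 + ε)`.
-/

section RelativeError

variable {a b ε : ℝ}

lemma one_sub_mul_le_of_abs_sub_le_mul_abs (h : |a - b| ≤ ε * |a|) (ha : 0 ≤ a) :
    (1 - ε) * a ≤ b := by
  rw [abs_of_nonneg ha] at h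
  linarith [le_abs_self (a - b)]

lemma le_one_add_mul_of_abs_sub_le_mul_abs (h : |a - b| ≤ ε * |a|) (ha : 0 ≤ a) :
    b ≤ (1 + ε) * a := by
  rw [abs_of_nonneg ha] at h
  linarith [neg_abs_le (a - b)]

lemma pos_of_abs_sub_le_mul_abs (hε : ε < 1) (h : |a - b| ≤ ε * |a|) (hb : 0 < b) : 0 < a := by
  by_contra! ha
  rw [abs_of_nonpos ha] at h
  nlinarith [neg_abs_le (a - b)]

theorem sub_le_two_mul_div_one_add_mul_of_abs_sub_le_mul_abs {a₀ b₀ : ℝ} (hε : ε < 1)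
    (h₀ : |a₀ - b₀| ≤ ε * |a₀|) (h : |a - b| ≤ ε * |a|) (hb : b₀ ≤ b) (ha₀ : 0 < a₀) :
    0 < a ∧ 0 < b ∧ a₀ - a ≤ 2 * ε / (1 + ε) * a₀ := by
  have hε₀ : 0 ≤ ε := nonneg_of_mul_nonneg_left ((abs_nonneg _).trans h₀) (abs_pos.2 ha₀.ne')
  have hb₀ : (1 - ε) * a₀ ≤ b₀ := one_sub_mul_le_of_abs_sub_le_mul_abs h₀ ha₀.le
  have hb_pos : 0 < b := by nlinarith
  have ha_pos : 0 < a := pos_of_abs_sub_le_mul_abs hε h hb_pos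
  have hba : b ≤ (1 + ε) * a := le_one_add_mul_of_abs_sub_le_mul_abs h ha_pos.le
  refine ⟨ha_pos, hb_pos, ?_⟩
  rw [div_mul_eq_mul_div, le_div_iff₀ (by linarith)]
  nlinarith

end RelativeError

theorem stmt_8_general {Ξ : Type*} (τ : ℝ)
    (hτ : τ ∈ Set.Ioo (0 : ℝ) 1) (E Ehat : Ξ → ℝ)
    (ξstar : Ξ) (hpos : 0 < E ξstar)
    (happrox : ∀ ξ, |E ξ - Ehat ξ| ≤ (τ / (2 + τ)) * |E ξ|)
    (ξhat : Ξ) (hhat : ∀ ξ, Ehat ξ ≤ Ehat ξhat) :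
    0 < E ξhat ∧ 0 < Ehat ξhat ∧
      E ξstar - E ξhat ≤ (2 * (τ / (2 + τ)) / (1 + τ / (2 + τ))) * |E ξstar| := by
  have hε : τ / (2 + τ) < 1 := (div_lt_one (by linarith [hτ.1])).2 (by linarith)
  rw [abs_of_pos hpos]
  exact sub_le_two_mul_div_one_add_mul_of_abs_sub_le_mul_abs hε (happrox ξstar) (happrox ξhat)
    (hhat ξstar) hpos

/-- improved deterministic bound when the maximal expectation is positive. -/
theorem stmt_8 {Ξ : Type*} [Fintype Ξ] [Nonempty Ξ] (τ : ℝ)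
    (hτ : τ ∈ Set.Ioo (0 : ℝ) 1) (E Ehat : Ξ → ℝ) (hE : ∀ ξ, E ξ ≠ 0)
    (ξstar : Ξ) (hstar : ∀ ξ, E ξ ≤ E ξstar) (hpos : 0 < E ξstar)
    (happrox : ∀ ξ, |E ξ - Ehat ξ| ≤ (τ / (2 + τ)) * |E ξ|)
    (ξhat : Ξ) (hhat : ∀ ξ, Ehat ξ ≤ Ehat ξhat) :
    0 < E ξhat ∧ 0 < Ehat ξhat ∧
      E ξstar - E ξhat ≤ (2 * (τ / (2 + τ)) / (1 + τ / (2 + τ))) * |E ξstar| :=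
  stmt_8_general τ hτ E Ehat ξstar hpos happrox ξhat hhat
end

section
/- Let q, k be positive real numbers. If t > 0 satisfies log(q t)/t = k, then t ≤ (2/k) log(2q/k). -/
/-! Write `q t = (2q/k) · (kt/2)`. Then `kt = log (q t) = log (2q/k) + log (kt/2)`, and
`log (kt/2) ≤ kt/2 - 1` absorbs half of the left side, leaving `kt/2 ≤ log (2q/k) - 1`. -/

open Real

lemma Real.log_mul_le_log_add_sub_one {c s : ℝ} (hc : 0 < c) (hs : 0 < s) :
    log (c * s) ≤ log c + s - 1 := by
  rw [log_mul hc.ne' hs.ne']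
  linarith [log_le_sub_one_of_pos hs]

lemma mul_le_two_mul_log_sub_one_of_log_mul_eq {q k t : ℝ} (hq : 0 < q) (hk : 0 < k)
    (ht : 0 < t) (h : log (q * t) = k * t) : k * t ≤ 2 * (log (2 * q / k) - 1) := by
  have hsplit : q * t = 2 * q / k * (k * t / 2) := by field_simp
  have hle := log_mul_le_log_add_sub_one (c := 2 * q / k) (s := k * t / 2) (by positivity)
    (by positivity)
  rw [← hsplit, h] at hle
  linarith

/-- bound on solutions of log(qt)/t = k. -/
theorem stmt_12 (q k t : ℝ) (hq : 0 < q) (hk : 0 < k) (ht : 0 < t)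
    (h : Real.log (q * t) / t = k) : t ≤ 2 / k * Real.log (2 * q / k) := by
  have hlog : log (q * t) = k * t := by rw [← h, div_mul_cancel₀ _ ht.ne']
  have hbound := mul_le_two_mul_log_sub_one_of_log_mul_eq hq hk ht hlog
  rw [div_mul_eq_mul_div, le_div_iff₀ hk]
  linarith
end

section
/- Let q, k be positive real numbers such that the equation log(q t)/t = k has a solution t > 0. Then for every t' ≥ (2/k) log(2q/k), one has log(q t')/t' ≤ k. -/
/-!
Since log x ≤ x / e, a solution t of log (q t) = k t forces e k ≤ q. Hence 2q/k > 1, the threshold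
(2/k) log(2q/k) is positive, and for t' beyond it the splitting q t' = (2q/k)(k t'/2) together with
log y ≤ y - 1 gives log (q t') ≤ k t'/2 + (k t'/2 - 1) < k t'.
-/

namespace Real

theorem exp_one_mul_le_of_log_mul_div_eq {q k t : ℝ} (hq : 0 < q) (ht : 0 < t)
    (h : log (q * t) / t = k) : exp 1 * k ≤ q := by
  have hlog : log (q * t) = k * t := by rw [← h]; field_simp
  have hle := exp_one_mul_le_exp (x := log (q * t))
  rw [exp_log (by positivity), hlog, ← mul_assoc] at hle
  exact le_of_mul_le_mul_right hle ht

theorem log_mul_lt_of_log_two_mul_div_le {q k t : ℝ} (hq : 0 < q) (hk : 0 < k) (ht : 0 < t)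
    (h : log (2 * q / k) ≤ k * t / 2) : log (q * t) < k * t := by
  have hsplit : q * t = 2 * q / k * (k * t / 2) := by field_simp
  calc log (q * t) = log (2 * q / k) + log (k * t / 2) := by
        rw [hsplit, log_mul (by positivity) (by positivity)]
    _ ≤ k * t / 2 + (k * t / 2 - 1) := add_le_add h (log_le_sub_one_of_pos (by positivity))
    _ < k * t := by linarith

end Real

open Real

/-- past the threshold (2/k) log(2q/k), log(qt)/t stays below k. -/
theorem stmt_13 (q k : ℝ) (hq : 0 < q) (hk : 0 < k)
    (hsol : ∃ t : ℝ, 0 < t ∧ Real.log (q * t) / t = k)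
    (t' : ℝ) (ht' : 2 / k * Real.log (2 * q / k) ≤ t') :
    Real.log (q * t') / t' ≤ k := by
  obtain ⟨t, ht, hsol⟩ := hsol
  have hek : exp 1 * k ≤ q := exp_one_mul_le_of_log_mul_div_eq hq ht hsol
  have h2q : 1 < 2 * q / k := by
    rw [one_lt_div hk]
    nlinarith [add_one_le_exp 1]
  have ht'_pos : 0 < t' := lt_of_lt_of_le (mul_pos (by positivity) (log_pos h2q)) ht'
  have hlog : log (2 * q / k) ≤ k * t' / 2 := by
    rw [div_mul_eq_mul_div, div_le_iff₀ hk] at ht'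
    linarith
  exact (div_le_iff₀ ht'_pos).2 (log_mul_lt_of_log_two_mul_div_le hq hk ht'_pos hlog).le
end
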